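/- arXiv:2104.04890 — 6 statements merged into one kernel-verified Lean document; each statement's English description precedes it below -/
import Mathlib

section
/- The function φ_Ne(z) = 1 + z - z³/3 maps the point e^{iθ} on the unit circle to a point (u,v) satisfying the nephroid equation ((u-1)² + v² - 4/9)³ - (4/3)v² = 0. -/
open Complex Real

theorem nephroid_boundary (θ : ℝ) :
    let φ : ℂ → ℂ := fun z => 1 + z - z ^ 3 / 3
    let u : ℝ := (φ (Complex.exp (θ * Complex.I))).re
    let v : ℝ := (φ (Complex.exp (θ * Complex.I))).im
    ((u - 1) ^ 2 + v ^ 2 - 4 / 9) ^ 3 - 4 / 3 * v ^ 2 = 0 := by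
  intro φ u v
  have hs := Real.sin_sq_add_cos_sq θ
  set s := Real.sin θ
  set c := Real.cos θ
  have hz : Complex.exp (θ * Complex.I) = (c : ℂ) + (s : ℂ) * Complex.I := by
    rw [Complex.exp_mul_I, ← Complex.ofReal_cos, ← Complex.ofReal_sin]
  have hφ : φ (Complex.exp (θ * Complex.I)) =
      ((1 + c - (c ^ 3 - 3 * c * s ^ 2) / 3 : ℝ) : ℂ) +
      ((s - (3 * c ^ 2 * s - s ^ 3) / 3 : ℝ) : ℂ) * Complex.I := by
    rw [hz]; simp only [φ]; push_cast
    linear_combination (-(c:ℂ) * s ^ 2 - (s:ℂ) ^ 3 * Complex.I / 3) * Complex.I_sq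
  have hu : u = 1 + c - (c ^ 3 - 3 * c * s ^ 2) / 3 := by
    simp [u, hφ, ← Complex.ofReal_pow]
  have hv : v = s - (3 * c ^ 2 * s - s ^ 3) / 3 := by
    simp [v, hφ, ← Complex.ofReal_pow]
  have hv' : v = 4 / 3 * s ^ 3 := by
    rw [hv]; linear_combination (-s) * hs
  have hin : (u - 1) ^ 2 + v ^ 2 - 4 / 9 = 4 / 3 * s ^ 2 := by
    rw [hu, hv']
    linear_combination (16/9 * s^4 + 16/9 * (1 - c^2) * s^2 + 16/9 * (1 - c^2)^2 - 4/3
      + (c - c^3/3 + c*s^2 + (2*c - 4/3*c^3)) * c) * hs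
  rw [hin, hv']
  ring
end

section
/- The bound β ≥ 1/2 in the previous implication is sharp: for β = 1/2, the boundary of the disk q_{1/2}(𝔻) = {w : |w-1| < 2/3} touches the nephroid boundary curve at the points 5/3 and 1/3, i.e., the minimum of d₁(θ) - 1/(1+β)² over θ is zero when β = 1/2, attained at θ = 0 and θ = π. -/
theorem half_is_sharp :
    let d₁ : ℝ → ℝ := fun θ => 16 / 9 - 4 / 3 * (Real.cos θ) ^ 2
    let β : ℝ := 1 / 2
    (∀ θ : ℝ, 0 ≤ d₁ θ - 1 / (1 + β) ^ 2) ∧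
    d₁ 0 - 1 / (1 + β) ^ 2 = 0 ∧ d₁ Real.pi - 1 / (1 + β) ^ 2 = 0 := by
  refine ⟨fun θ => ?_, by norm_num, by norm_num⟩
  have h := Real.cos_sq_le_one θ
  nlinarith
end

section
/- For β > 0, ψ_β(1) = (1/β)∫₀¹ e^t t^{1/β-1} dt = Σ_{j=0}^∞ 1/(j!(1 + jβ)), and the function ρ(β) := 5/3 - Σ_{j=0}^∞ 1/(j!(1 + jβ)) is strictly increasing on (0, ∞). -/
open Real MeasureTheory intervalIntegral

lemma aux_fac_summable : Summable (fun n : ℕ => 1 / (n.factorial : ℝ)) := by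
  simpa using Real.summable_pow_div_factorial 1

lemma aux_summable (β : ℝ) (hβ : 0 < β) :
    Summable (fun j : ℕ => 1 / (j.factorial * (1 + j * β)) : ℕ → ℝ) := by
  refine Summable.of_nonneg_of_le (fun j => by positivity) (fun j => ?_) aux_fac_summable
  have hj : (0:ℝ) < (j.factorial : ℝ) := by positivity
  have hjb : (0:ℝ) ≤ (j:ℝ) * β := by positivity
  have h1 : (0:ℝ) < 1 + j * β := by positivity
  rw [div_le_div_iff₀ (by positivity) hj]
  nlinarith [mul_nonneg hj.le hjb]

theorem psi_at_one_and_rho_mono :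
    (∀ β : ℝ, 0 < β →
      (1 / β) * ∫ t in (0:ℝ)..1, Real.exp t * t ^ (1 / β - 1)
        = ∑' j : ℕ, 1 / (j.factorial * (1 + j * β))) ∧
    StrictMonoOn (fun β : ℝ => 5 / 3 - ∑' j : ℕ, 1 / (j.factorial * (1 + j * β)))
      (Set.Ioi (0:ℝ)) := by
  constructor
  · intro β hβ
    have hβ' : (0:ℝ) < 1 / β := by positivity
    set F : ℕ → ℝ → ℝ := fun j t => t ^ ((j:ℝ) + (1 / β - 1)) / j.factorial with hF
    have hr : ∀ j : ℕ, (-1:ℝ) < (j:ℝ) + (1 / β - 1) := by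
      intro j
      have : (0:ℝ) ≤ (j:ℝ) := j.cast_nonneg
      linarith
    have hpos : ∀ j : ℕ, (0:ℝ) < (j:ℝ) + 1 / β := by
      intro j
      have : (0:ℝ) ≤ (j:ℝ) := j.cast_nonneg
      linarith
    have hval : ∀ j : ℕ, (∫ t in (0:ℝ)..1, t ^ ((j:ℝ) + (1 / β - 1)))
        = 1 / ((j:ℝ) + 1 / β) := by
      intro j
      rw [integral_rpow (Or.inl (hr j))]
      have he : (j:ℝ) + (1 / β - 1) + 1 = (j:ℝ) + 1 / β := by ring
      rw [he, Real.one_rpow, Real.zero_rpow (ne_of_gt (hpos j))]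
      ring
    have hii : ∀ j : ℕ, IntervalIntegrable (fun t : ℝ => t ^ ((j:ℝ) + (1 / β - 1)))
        volume 0 1 := fun j => intervalIntegrable_rpow' (hr j)
    have hint : ∀ j : ℕ, Integrable (F j) (volume.restrict (Set.Ioc (0:ℝ) 1)) := by
      intro j
      exact ((hii j).1).div_const _
    -- value of each set integral
    have hvalF : ∀ j : ℕ, (∫ t in Set.Ioc (0:ℝ) 1, F j t)
        = 1 / ((j.factorial : ℝ) * ((j:ℝ) + 1 / β)) := by
      intro j
      have h1 : (∫ t in Set.Ioc (0:ℝ) 1, F j t)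
          = (∫ t in Set.Ioc (0:ℝ) 1, t ^ ((j:ℝ) + (1 / β - 1))) / j.factorial :=
        MeasureTheory.integral_div _ _
      rw [h1, ← intervalIntegral.integral_of_le (by norm_num : (0:ℝ) ≤ 1), hval j,
        div_div, mul_comm ((j:ℝ) + 1 / β)]
    -- norms of integrands
    have hnorm : ∀ j : ℕ, (∫ t in Set.Ioc (0:ℝ) 1, ‖F j t‖)
        = 1 / ((j.factorial : ℝ) * ((j:ℝ) + 1 / β)) := by
      intro j
      rw [← hvalF j]
      refine setIntegral_congr_fun measurableSet_Ioc (fun t ht => ?_)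
      have h0 : (0:ℝ) ≤ t ^ ((j:ℝ) + (1 / β - 1)) := Real.rpow_nonneg ht.1.le _
      have : (0:ℝ) ≤ F j t := by
        simp only [hF]; positivity
      exact Real.norm_of_nonneg this
    have hsum : Summable fun j : ℕ => ∫ t in Set.Ioc (0:ℝ) 1, ‖F j t‖ := by
      simp_rw [hnorm]
      refine Summable.of_nonneg_of_le (fun j => ?_) (fun j => ?_)
        (aux_fac_summable.mul_left β)
      · have := hpos j
        positivity
      · have hj : (0:ℝ) < (j.factorial : ℝ) := by positivity
        have hx := hpos j
        rw [div_le_iff₀ (by positivity), mul_one_div, div_mul_eq_mul_div,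
          le_div_iff₀ hj]
        have hinv : β * (1 / β) = 1 := by
          field_simp
        have h1β : (1:ℝ) * (j.factorial:ℝ) ≤ β * ((j.factorial:ℝ) * ((j:ℝ) + 1/β)) := by
          have he : β * ((j.factorial:ℝ) * ((j:ℝ) + 1/β)) = (j.factorial:ℝ) * (β * j + 1) := by
            calc β * ((j.factorial:ℝ) * ((j:ℝ) + 1/β))
                = (j.factorial:ℝ) * (β * j) + (j.factorial:ℝ) * (β * (1/β)) := by ring
              _ = (j.factorial:ℝ) * (β * j + 1) := by rw [hinv]; ring
          rw [he, one_mul]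
          nlinarith [mul_nonneg hj.le (mul_nonneg hβ.le (j.cast_nonneg (α := ℝ)))]
        linarith [h1β]
    -- exchange sum and integral
    have hexch : (∑' j : ℕ, ∫ t in Set.Ioc (0:ℝ) 1, F j t)
        = ∫ t in Set.Ioc (0:ℝ) 1, ∑' j : ℕ, F j t :=
      integral_tsum_of_summable_integral_norm hint hsum
    -- pointwise sum
    have hpt : ∀ t ∈ Set.Ioc (0:ℝ) 1, (∑' j : ℕ, F j t) = Real.exp t * t ^ (1 / β - 1) := by
      intro t ht
      have ht0 : (0:ℝ) < t := ht.1
      have h1 : ∀ j : ℕ, F j t = (t ^ j / j.factorial) * t ^ (1 / β - 1) := by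
        intro j
        simp only [hF]
        rw [Real.rpow_add ht0, Real.rpow_natCast]
        ring
      simp_rw [h1]
      rw [tsum_mul_right]
      congr 1
      rw [Real.exp_eq_exp_ℝ, NormedSpace.exp_eq_tsum_div]
    have key : (∫ t in (0:ℝ)..1, Real.exp t * t ^ (1 / β - 1))
        = ∑' j : ℕ, 1 / ((j.factorial : ℝ) * ((j:ℝ) + 1 / β)) := by
      rw [intervalIntegral.integral_of_le (by norm_num : (0:ℝ) ≤ 1),
        ← setIntegral_congr_fun measurableSet_Ioc hpt, ← hexch]
      exact tsum_congr hvalF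
    rw [key, ← tsum_mul_left]
    refine tsum_congr (fun j => ?_)
    have hj : (0:ℝ) < (j.factorial : ℝ) := by positivity
    have hx := hpos j
    rw [div_mul_div_comm, one_mul]
    have hinv : β * (1 / β) = 1 := by field_simp
    congr 1
    calc β * ((j.factorial:ℝ) * ((j:ℝ) + 1/β))
        = (j.factorial:ℝ) * ((j:ℝ) * β) + (j.factorial:ℝ) * (β * (1/β)) := by ring
      _ = (j.factorial:ℝ) * (1 + (j:ℝ) * β) := by rw [hinv]; ring
  · intro a ha b hb hab
    have ha' : (0:ℝ) < a := ha
    have hb' : (0:ℝ) < b := hb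
    simp only
    have key : (∑' j : ℕ, 1 / ((j.factorial : ℝ) * (1 + j * b)))
        < ∑' j : ℕ, 1 / ((j.factorial : ℝ) * (1 + j * a)) := by
      refine Summable.tsum_lt_tsum_of_nonneg (i := 1) (fun j => by positivity) (fun j => ?_) ?_
        (aux_summable a ha')
      · have h1 : (0:ℝ) < 1 + j * a := by positivity
        have h2 : (1:ℝ) + j * a ≤ 1 + j * b := by
          have := j.cast_nonneg (α := ℝ)
          nlinarith
        have hj : (0:ℝ) < (j.factorial : ℝ) := by positivity
        gcongr
      · simp only [Nat.factorial_one, Nat.cast_one, one_mul]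
        rw [div_lt_div_iff₀ (by linarith) (by linarith)]
        linarith
    linarith
end

section
/- For β > 0, ψ_β(-1) = Σ_{j=0}^∞ (-1)^j/(j!(1 + jβ)), and the function μ(β) := Σ_{j=0}^∞ (-1)^j/(j!(1 + jβ)) - 1/3 satisfies μ(β) > 0 for all β > 0 (indeed μ(β) ≥ 1/e - 1/3, with limits 1/e - 1/3 as β → 0⁺ and 2/3 as β → ∞). -/
/-!
Expanding `e^{xt}` in its power series and integrating term by term against `t^{c-1}` on `(0, 1]`
gives `∫₀¹ e^{xt} t^{c-1} dt = ∑ x^j / (j! (j + c))`; with `x = -1`, `c = 1/β` this is the series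
representation. Since `e^{-t} ≥ e^{-1}` on `[0, 1]` and `(1/β) ∫₀¹ t^{1/β-1} dt = 1`, the series is at
least `e^{-1} > 1/3` (as `e < 3`). Both limits follow by dominated convergence for the series: its
`j`-th term is bounded by `1/j!`, tends to `(-1)^j/j!` as `β → 0⁺`, and to `0` for `j ≥ 1` as `β → ∞`.
-/

open Real Filter Topology intervalIntegral MeasureTheory Set
open scoped Nat

lemma hasSum_pow_div_factorial_exp (x : ℝ) : HasSum (fun n : ℕ => x ^ n / n !) (exp x) := by
  rw [exp_eq_exp_ℝ]
  exact NormedSpace.expSeries_div_hasSum_exp x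

lemma setIntegral_Ioc_zero_one_rpow_sub_one {c : ℝ} (hc : 0 < c) :
    ∫ t in Ioc (0:ℝ) 1, t ^ (c - 1) = 1 / c := by
  rw [← integral_of_le zero_le_one, integral_rpow (Or.inl (by linarith)), sub_add_cancel,
    one_rpow, zero_rpow hc.ne', sub_zero]

lemma integral_exp_mul_mul_rpow_sub_one {c : ℝ} (hc : 0 < c) (x : ℝ) :
    ∫ t in (0:ℝ)..1, exp (x * t) * t ^ (c - 1) = ∑' j : ℕ, x ^ j / (j ! * (j + c)) := by
  set F : ℝ → ℕ → ℝ → ℝ := fun y j t => y ^ j / j ! * t ^ (j + c - 1) with hF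
  have hjc (j : ℕ) : 0 < (j : ℝ) + c := by positivity
  have integral_F (y : ℝ) (j : ℕ) : ∫ t in Ioc 0 1, F y j t = y ^ j / (j ! * (j + c)) := by
    rw [hF, MeasureTheory.integral_const_mul, setIntegral_Ioc_zero_one_rpow_sub_one (hjc j)]
    field_simp
  have integrable_F (j : ℕ) : IntegrableOn (F x j) (Ioc 0 1) :=
    (intervalIntegrable_iff_integrableOn_Ioc_of_le zero_le_one).1
      ((intervalIntegrable_rpow' (by linarith [hjc j])).const_mul _)
  have norm_F (j : ℕ) : ∫ t in Ioc 0 1, ‖F x j t‖ = |x| ^ j / (j ! * (j + c)) := by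
    rw [← integral_F]
    refine setIntegral_congr_fun measurableSet_Ioc fun t ht => ?_
    simp only [hF, norm_mul, norm_div, norm_pow, Real.norm_eq_abs, Nat.abs_cast,
      abs_of_nonneg (rpow_nonneg ht.1.le _)]
  have summable_norm_F : Summable fun j => ∫ t in Ioc 0 1, ‖F x j t‖ := by
    simp only [norm_F]
    refine ((Real.summable_pow_div_factorial |x|).mul_right (1 / c)).of_nonneg_of_le
      (fun j => by positivity) fun j => ?_
    rw [div_mul_div_comm, mul_one]
    gcongr
    linarith [(Nat.cast_nonneg j : (0:ℝ) ≤ j)]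
  have tsum_F (t : ℝ) (ht : t ∈ Ioc 0 1) : ∑' j, F x j t = exp (x * t) * t ^ (c - 1) := by
    have (j : ℕ) : F x j t = (x * t) ^ j / j ! * t ^ (c - 1) := by
      show x ^ j / j ! * t ^ ((j : ℝ) + c - 1) = _
      rw [add_sub_assoc, rpow_add ht.1, rpow_natCast]
      ring
    simp only [this, tsum_mul_right, (hasSum_pow_div_factorial_exp (x * t)).tsum_eq]
  rw [integral_of_le zero_le_one, ← setIntegral_congr_fun measurableSet_Ioc tsum_F,
    ← integral_tsum_of_summable_integral_norm integrable_F summable_norm_F]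
  exact tsum_congr (integral_F x)

lemma one_div_mul_integral_exp_neg_mul_rpow {β : ℝ} (hβ : 0 < β) :
    (1 / β) * ∫ t in (0:ℝ)..1, exp (-t) * t ^ (1 / β - 1)
      = ∑' j : ℕ, (-1 : ℝ) ^ j / (j ! * (1 + j * β)) := by
  have h := integral_exp_mul_mul_rpow_sub_one (one_div_pos.2 hβ) (-1)
  simp only [neg_one_mul] at h
  rw [h, ← tsum_mul_left]
  refine tsum_congr fun j => ?_
  field_simp
  ring

lemma exp_neg_one_div_le_integral_exp_neg_mul_rpow {c : ℝ} (hc : 0 < c) :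
    exp (-1) / c ≤ ∫ t in (0:ℝ)..1, exp (-t) * t ^ (c - 1) := by
  have h_rpow : IntervalIntegrable (fun t : ℝ => t ^ (c - 1)) volume 0 1 :=
    intervalIntegrable_rpow' (by linarith)
  calc exp (-1) / c = ∫ t in (0:ℝ)..1, exp (-1) * t ^ (c - 1) := by
        rw [intervalIntegral.integral_const_mul, integral_of_le zero_le_one,
          setIntegral_Ioc_zero_one_rpow_sub_one hc, mul_one_div]
    _ ≤ ∫ t in (0:ℝ)..1, exp (-t) * t ^ (c - 1) := by
        refine integral_mono_on zero_le_one (h_rpow.const_mul _)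
          (h_rpow.continuousOn_mul (by fun_prop)) fun t ht => ?_
        gcongr
        · exact rpow_nonneg ht.1 _
        · exact ht.2

lemma exp_neg_one_le_tsum {β : ℝ} (hβ : 0 < β) :
    exp (-1) ≤ ∑' j : ℕ, (-1 : ℝ) ^ j / (j ! * (1 + j * β)) := by
  rw [← one_div_mul_integral_exp_neg_mul_rpow hβ]
  have := exp_neg_one_div_le_integral_exp_neg_mul_rpow (one_div_pos.2 hβ)
  rw [div_le_iff₀ (one_div_pos.2 hβ)] at this
  linarith

lemma norm_neg_one_pow_div_le {β : ℝ} (hβ : 0 ≤ β) (j : ℕ) :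
    ‖(-1 : ℝ) ^ j / (j ! * (1 + j * β))‖ ≤ 1 / j ! := by
  rw [norm_div, norm_pow, norm_neg, norm_one, one_pow, Real.norm_of_nonneg (by positivity)]
  gcongr
  exact le_mul_of_one_le_right (by positivity) (by nlinarith [(Nat.cast_nonneg j : (0:ℝ) ≤ j)])

lemma tendsto_tsum_nhdsGT_zero :
    Tendsto (fun β : ℝ => ∑' j : ℕ, (-1 : ℝ) ^ j / (j ! * (1 + j * β))) (𝓝[>] 0)
      (𝓝 (exp (-1))) := by
  rw [← (hasSum_pow_div_factorial_exp (-1)).tsum_eq]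
  refine tendsto_tsum_of_dominated_convergence (Real.summable_pow_div_factorial 1)
    (fun j => ?_) ?_
  · have : ContinuousAt (fun β : ℝ => (-1 : ℝ) ^ j / (j ! * (1 + j * β))) 0 :=
      (continuousAt_const.div (by fun_prop) (by simp [j.factorial_ne_zero]))
    simpa using this.tendsto.mono_left nhdsWithin_le_nhds
  · filter_upwards [self_mem_nhdsWithin] with β hβ j
    simpa using norm_neg_one_pow_div_le (le_of_lt hβ) j

lemma tendsto_tsum_atTop :
    Tendsto (fun β : ℝ => ∑' j : ℕ, (-1 : ℝ) ^ j / (j ! * (1 + j * β))) atTop (𝓝 1) := by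
  have h_term (j : ℕ) : Tendsto (fun β : ℝ => (-1 : ℝ) ^ j / (j ! * (1 + j * β))) atTop
      (𝓝 (if j = 0 then 1 else 0)) := by
    rcases j.eq_zero_or_pos with rfl | hj
    · simp
    · rw [if_neg hj.ne']
      refine tendsto_const_nhds.div_atTop (Tendsto.const_mul_atTop (by positivity) ?_)
      exact tendsto_atTop_add_const_left _ _ (tendsto_id.const_mul_atTop (by positivity))
  simpa using tendsto_tsum_of_dominated_convergence (Real.summable_pow_div_factorial 1) h_term
    ((eventually_ge_atTop 0).mono fun β hβ j => by simpa using norm_neg_one_pow_div_le hβ j)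

theorem mu_positive :
    (∀ β : ℝ, 0 < β →
      (1 / β) * ∫ t in (0:ℝ)..1, Real.exp (-t) * t ^ (1 / β - 1)
        = ∑' j : ℕ, (-1 : ℝ) ^ j / (j.factorial * (1 + j * β))) ∧
    (∀ β : ℝ, 0 < β →
      0 < (∑' j : ℕ, (-1 : ℝ) ^ j / (j.factorial * (1 + j * β))) - 1 / 3 ∧
      Real.exp (-1) - 1 / 3 ≤
        (∑' j : ℕ, (-1 : ℝ) ^ j / (j.factorial * (1 + j * β))) - 1 / 3) ∧
    Filter.Tendsto
      (fun β : ℝ => (∑' j : ℕ, (-1 : ℝ) ^ j / (j.factorial * (1 + j * β))) - 1 / 3)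
      (nhdsWithin 0 (Set.Ioi 0)) (nhds (Real.exp (-1) - 1 / 3)) ∧
    Filter.Tendsto
      (fun β : ℝ => (∑' j : ℕ, (-1 : ℝ) ^ j / (j.factorial * (1 + j * β))) - 1 / 3)
      Filter.atTop (nhds (2 / 3)) := by
  have third_lt_exp_neg_one : (1 : ℝ) / 3 < exp (-1) := by
    rw [exp_neg, one_div]
    exact inv_strictAnti₀ (exp_pos 1) exp_one_lt_three
  refine ⟨fun β hβ => one_div_mul_integral_exp_neg_mul_rpow hβ, fun β hβ => ?_,
    tendsto_tsum_nhdsGT_zero.sub_const _, ?_⟩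
  · have := exp_neg_one_le_tsum hβ
    constructor <;> linarith
  · convert tendsto_tsum_atTop.sub_const (1 / 3 : ℝ) using 2
    norm_num
end

section
/- For β > 0, the function Ψ_β(z) = F(-1/2, 1/β; 1/β + 1; -z) (Gaussian hypergeometric function) evaluated at z = -1 gives Ψ_β(-1) = (1/Γ(-1/2)) Σ_{j=0}^∞ Γ(-1/2 + j)/(j!(1 + jβ)), and the function τ(β) := (1/Γ(-1/2)) Σ_{j=0}^∞ Γ(-1/2+j)/(j!(1+jβ)) - 1/3 is strictly increasing on (0, ∞). -/
/-!
Since `Γ(a + j) = (a)_j Γ(a)` and `(b)_j / (b + 1)_j = b / (b + j)`, with `b = 1/β` both sides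
of the identity equal `∑ c_j / (1 + jβ)` where `c_j = (-1/2)_j / j!`. For `-1 < a < 0` the
coefficients `(a)_j / j!` are negative from `j = 1` on, and their partial sums telescope to
`(a + 1)_n / n! ≥ 0`, so they are summable. Each term `c_j / (1 + jβ)` is then nondecreasing
in `β`, strictly so for `j = 1`.
-/

open Real

/-- Pochhammer symbol `(x)_j = x(x+1)⋯(x+j-1)` for real `x`. -/
def poch (x : ℝ) (j : ℕ) : ℝ := ∏ i ∈ Finset.range j, (x + i)

/-- Gaussian hypergeometric series as a sum (real arguments). -/
noncomputable def hypF (a b c x : ℝ) : ℝ :=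
  ∑' j : ℕ, poch a j * poch b j / (j.factorial * poch c j) * x ^ j

open Finset

lemma poch_zero (x : ℝ) : poch x 0 = 1 := prod_range_zero _

lemma poch_succ (x : ℝ) (j : ℕ) : poch x (j + 1) = poch x j * (x + j) :=
  prod_range_succ _ _

lemma poch_succ' (x : ℝ) (j : ℕ) : poch x (j + 1) = x * poch (x + 1) j := by
  rw [poch, prod_range_succ', poch, Nat.cast_zero, add_zero, mul_comm]
  congr 1
  refine prod_congr rfl fun i _ => ?_
  push_cast
  ring

lemma poch_mul_add_nat (x : ℝ) (j : ℕ) : poch x j * (x + j) = x * poch (x + 1) j := by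
  rw [← poch_succ, poch_succ']

lemma poch_pos {x : ℝ} (hx : 0 < x) (j : ℕ) : 0 < poch x j :=
  prod_pos fun i _ => by positivity

lemma poch_succ_neg {x : ℝ} (hx₁ : -1 < x) (hx₀ : x < 0) (j : ℕ) : poch x (j + 1) < 0 := by
  rw [poch_succ']
  exact mul_neg_of_neg_of_pos hx₀ (poch_pos (by linarith) j)

lemma Gamma_add_nat_eq_poch_mul {x : ℝ} (hx : ∀ k : ℕ, x + k ≠ 0) (j : ℕ) :
    Gamma (x + j) = poch x j * Gamma x := by
  induction j with
  | zero => simp [poch_zero]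
  | succ j ih =>
    rw [Nat.cast_succ, ← add_assoc, Gamma_add_one (hx j), ih, poch_succ]
    ring

lemma sum_range_poch_div_factorial (a : ℝ) (n : ℕ) :
    ∑ j ∈ range (n + 1), poch a j / j.factorial = poch (a + 1) n / n.factorial := by
  induction n with
  | zero => simp [poch_zero]
  | succ n ih =>
    rw [sum_range_succ, ih, poch_succ', poch_succ, Nat.factorial_succ]
    push_cast
    field_simp
    ring

lemma summable_poch_div_factorial {a : ℝ} (ha₁ : -1 < a) (ha₀ : a < 0) :
    Summable fun j => poch a j / j.factorial := by
  rw [← summable_nat_add_iff 1, ← summable_neg_iff]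
  refine summable_of_sum_range_le (c := 1)
    (fun j => neg_nonneg.2 (div_nonpos_of_nonpos_of_nonneg (poch_succ_neg ha₁ ha₀ j).le
      (Nat.cast_nonneg _))) fun n => ?_
  have htail := sum_range_poch_div_factorial a n
  rw [sum_range_succ', poch_zero, Nat.factorial_zero, Nat.cast_one, div_one] at htail
  rw [sum_neg_distrib]
  have : 0 ≤ poch (a + 1) n / n.factorial := by
    have := poch_pos (show 0 < a + 1 by linarith) n
    positivity
  linarith

lemma summable_div_one_add_mul {c : ℕ → ℝ} (hc : Summable c) {β : ℝ} (hβ : 0 ≤ β) :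
    Summable fun j : ℕ => c j / (1 + j * β) := by
  refine Summable.of_norm_bounded hc.norm fun j => ?_
  rw [norm_div]
  have : 1 ≤ ‖1 + j * β‖ := by
    rw [Real.norm_of_nonneg (by positivity)]
    linarith [mul_nonneg (Nat.cast_nonneg j) hβ]
  exact div_le_self (norm_nonneg _) this

lemma strictMonoOn_tsum_div_one_add_mul {c : ℕ → ℝ} (hc : Summable c)
    (hc_nonpos : ∀ j, 1 ≤ j → c j ≤ 0) (hc_one : c 1 < 0) :
    StrictMonoOn (fun β => ∑' j : ℕ, c j / (1 + j * β)) (Set.Ioi 0) := by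
  intro β₁ (hβ₁ : 0 < β₁) β₂ (hβ₂ : 0 < β₂) hlt
  refine Summable.tsum_lt_tsum (i := 1) (fun j => ?_) ?_
    (summable_div_one_add_mul hc hβ₁.le) (summable_div_one_add_mul hc hβ₂.le)
  · rcases Nat.eq_zero_or_pos j with rfl | hj
    · simp
    · rw [← neg_le_neg_iff, ← neg_div, ← neg_div]
      exact div_le_div_of_nonneg_left (neg_nonneg.2 (hc_nonpos j hj)) (by positivity)
        (by gcongr)
  · rw [← neg_lt_neg_iff, ← neg_div, ← neg_div, Nat.cast_one, one_mul, one_mul]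
    exact div_lt_div_of_pos_left (neg_pos.2 hc_one) (by positivity) (by linarith)

lemma strictMonoOn_tsum_poch_div_factorial_div_one_add_mul {a : ℝ} (ha₁ : -1 < a) (ha₀ : a < 0) :
    StrictMonoOn (fun β => ∑' j : ℕ, poch a j / j.factorial / (1 + j * β)) (Set.Ioi 0) := by
  have hneg : ∀ j, poch a (j + 1) / (j + 1).factorial < 0 := fun j =>
    div_neg_of_neg_of_pos (poch_succ_neg ha₁ ha₀ j) (by positivity)
  refine strictMonoOn_tsum_div_one_add_mul (summable_poch_div_factorial ha₁ ha₀)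
    (fun j hj => ?_) (hneg 0)
  obtain ⟨k, rfl⟩ := Nat.exists_eq_add_of_le' hj
  exact (hneg k).le

lemma hypF_eq_tsum_div_one_add_mul (a : ℝ) {β : ℝ} (hβ : 0 < β) :
    hypF a (1 / β) (1 / β + 1) 1 = ∑' j : ℕ, poch a j / j.factorial / (1 + j * β) := by
  refine tsum_congr fun j => ?_
  have hratio : poch (1 / β) j * (1 + j * β) = poch (1 / β + 1) j := by
    have := poch_mul_add_nat (1 / β) j
    field_simp at this ⊢
    linear_combination this
  have := poch_pos (show 0 < 1 / β by positivity) j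
  rw [one_pow, mul_one, ← hratio]
  field_simp

lemma one_div_Gamma_mul_tsum_Gamma_add_nat {a : ℝ} (ha : ∀ k : ℕ, a + k ≠ 0) (β : ℝ) :
    1 / Gamma a * ∑' j : ℕ, Gamma (a + j) / (j.factorial * (1 + j * β))
      = ∑' j : ℕ, poch a j / j.factorial / (1 + j * β) := by
  have hΓ : Gamma a ≠ 0 := Gamma_ne_zero fun m h => ha m (by rw [h]; ring)
  rw [← tsum_mul_left]
  refine tsum_congr fun j => ?_
  rw [Gamma_add_nat_eq_poch_mul ha, div_div]
  field_simp

theorem Psi_at_minus_one_and_tau_mono :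
    (∀ β : ℝ, 0 < β →
      hypF (-1/2) (1/β) (1/β + 1) 1
        = (1 / Real.Gamma (-1/2)) *
            ∑' j : ℕ, Real.Gamma (-1/2 + j) / (j.factorial * (1 + j * β))) ∧
    StrictMonoOn
      (fun β : ℝ => (1 / Real.Gamma (-1/2)) *
          (∑' j : ℕ, Real.Gamma (-1/2 + j) / (j.factorial * (1 + j * β))) - 1/3)
      (Set.Ioi (0:ℝ)) := by
  have ha : ∀ k : ℕ, (-1/2 : ℝ) + k ≠ 0 := fun k h => by
    have : 2 * k = 1 := by exact_mod_cast (by linarith : (2 * k : ℝ) = 1)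
    omega
  simp only [one_div_Gamma_mul_tsum_Gamma_add_nat ha]
  exact ⟨fun β hβ => hypF_eq_tsum_div_one_add_mul _ hβ, fun β₁ hβ₁ β₂ hβ₂ hlt =>
    sub_lt_sub_right (strictMonoOn_tsum_poch_div_factorial_div_one_add_mul (by norm_num)
      (by norm_num) hβ₁ hβ₂ hlt) _⟩
end

section
/- If Re(c) > Re(a) > 0, then the confluent hypergeometric function satisfies the integral representation Φ(a; c; z) = (Γ(c)/(Γ(a)Γ(c-a))) ∫₀¹ t^{a-1}(1-t)^{c-a-1} e^{tz} dt for all z ∈ ℂ. -/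
open Complex intervalIntegral

/-- Pochhammer symbol `(x)_j` for complex `x`. -/
def cpoch (x : ℂ) (j : ℕ) : ℂ := ∏ i ∈ Finset.range j, (x + i)

/-- Kummer confluent hypergeometric series. -/
noncomputable def hyp1F1 (a c z : ℂ) : ℂ :=
  ∑' j : ℕ, cpoch a j * z ^ j / (cpoch c j * j.factorial)

/-!
Expand `exp (t z)` in its power series. On `[0, 1]` the partial sums are dominated by
`exp ‖z‖ · |t^(a-1) (1-t)^(c-a-1)|`, which is integrable, so the series may be integrated
termwise; the `j`-th term is `z^j / j! · B(a + j, c - a)`. Finally `Γ(x + j) = Γ(x) (x)_j`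
turns `B(a + j, c - a) / B(a, c - a)` into `(a)_j / (c)_j`.
-/

open MeasureTheory

lemma cpoch_eq_ascPochhammer_eval (x : ℂ) (j : ℕ) : cpoch x j = (ascPochhammer ℂ j).eval x := by
  induction j with
  | zero => simp [cpoch]
  | succ j ih => simp [cpoch, Finset.prod_range_succ, ascPochhammer_succ_right, ← ih]

lemma cpoch_ne_zero {x : ℂ} (hx : ∀ k : ℕ, x ≠ -k) (j : ℕ) : cpoch x j ≠ 0 := by
  rw [cpoch_eq_ascPochhammer_eval, ne_eq, ascPochhammer_eval_eq_zero_iff]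
  rintro ⟨k, -, hk⟩
  exact hx k (by rw [hk, neg_neg])

lemma Gamma_add_nat_eq_Gamma_mul_cpoch {x : ℂ} (hx : ∀ k : ℕ, x ≠ -k) (j : ℕ) :
    Gamma (x + j) = Gamma x * cpoch x j := by
  rw [cpoch_eq_ascPochhammer_eval, ← Gamma_add_nat_div_Gamma_eq x hx,
    mul_div_cancel₀ _ (Gamma_ne_zero hx)]

lemma ne_neg_natCast_of_re_pos {s : ℂ} (hs : 0 < s.re) (k : ℕ) : s ≠ -k := by
  rintro rfl
  exact hs.not_ge (by simp)

lemma betaIntegral_add_nat {a b : ℂ} (ha : 0 < a.re) (hb : 0 < b.re) (j : ℕ) :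
    betaIntegral (a + j) b = betaIntegral a b * cpoch a j / cpoch (a + b) j := by
  have hab : 0 < (a + b).re := by rw [add_re]; positivity
  have haj : 0 < (a + j).re := by rw [add_re, natCast_re]; positivity
  have h₀ := Gamma_mul_Gamma_eq_betaIntegral ha hb
  have hj := Gamma_mul_Gamma_eq_betaIntegral haj hb
  rw [add_right_comm, Gamma_add_nat_eq_Gamma_mul_cpoch (ne_neg_natCast_of_re_pos hab),
    Gamma_add_nat_eq_Gamma_mul_cpoch (ne_neg_natCast_of_re_pos ha), mul_right_comm, h₀] at hj
  rw [eq_div_iff (cpoch_ne_zero (ne_neg_natCast_of_re_pos hab) j)]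
  apply mul_left_cancel₀ (Gamma_ne_zero_of_re_pos hab)
  linear_combination -hj

lemma intervalIntegral_pow_mul_betaIntegrand (a b : ℂ) (j : ℕ) :
    ∫ t in (0:ℝ)..1, (t : ℂ) ^ j * ((t : ℂ) ^ (a - 1) * (1 - (t : ℂ)) ^ (b - 1))
      = betaIntegral (a + j) b := by
  refine integral_congr_ae (.of_forall fun t ht => ?_)
  rw [Set.uIoc_of_le zero_le_one] at ht
  have ht0 : (t : ℂ) ≠ 0 := ofReal_ne_zero.2 ht.1.ne'
  rw [add_sub_right_comm, cpow_add _ _ ht0, cpow_natCast]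
  ring

lemma intervalIntegral_mul_cexp_eq_tsum {w : ℝ → ℂ} (hw : IntervalIntegrable w volume 0 1)
    (z : ℂ) :
    ∫ t in (0:ℝ)..1, w t * exp (t * z)
      = ∑' j : ℕ, z ^ j / j.factorial * ∫ t in (0:ℝ)..1, (t : ℂ) ^ j * w t := by
  set F : ℕ → ℝ → ℂ := fun j t => z ^ j / j.factorial * ((t : ℂ) ^ j * w t)
  set bound : ℕ → ℝ → ℝ := fun j t => ‖z‖ ^ j / j.factorial * ‖w t‖
  have hF_int (j : ℕ) : IntervalIntegrable (F j) volume 0 1 :=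
    (hw.continuousOn_mul (by fun_prop)).const_mul _
  have hF_le (j : ℕ) (t : ℝ) (ht : t ∈ Set.uIoc (0:ℝ) 1) : ‖F j t‖ ≤ bound j t := by
    rw [Set.uIoc_of_le zero_le_one] at ht
    have ht_le : ‖(t : ℂ)‖ ≤ 1 := by
      rw [norm_real, Real.norm_of_nonneg ht.1.le]; exact ht.2
    simp only [F, bound, norm_mul, norm_div, norm_pow, norm_natCast]
    gcongr
    exact mul_le_of_le_one_left (norm_nonneg _) (pow_le_one₀ (norm_nonneg _) ht_le)
  have h_sum (t : ℝ) : HasSum (F · t) (w t * exp (t * z)) := by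
    have h := (NormedSpace.expSeries_div_hasSum_exp ((t : ℂ) * z)).mul_left (w t)
    rw [← exp_eq_exp_ℂ] at h
    exact h.congr_fun fun j => by ring
  have h_bound_sum : (fun t => ∑' j, bound j t) = fun t => Real.exp ‖z‖ * ‖w t‖ := by
    ext t
    rw [tsum_mul_right, Real.exp_eq_exp_ℝ, ← (NormedSpace.expSeries_div_hasSum_exp ‖z‖).tsum_eq]
  have h_int := intervalIntegral.hasSum_integral_of_dominated_convergence bound
    (fun j => (hF_int j).def'.aestronglyMeasurable)
    (fun j => Filter.Eventually.of_forall (hF_le j))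
    (Filter.Eventually.of_forall fun t _ => (Real.summable_pow_div_factorial ‖z‖).mul_right _)
    (h_bound_sum ▸ hw.norm.const_mul _)
    (Filter.Eventually.of_forall fun t _ => h_sum t)
  simp only [F, intervalIntegral.integral_const_mul] at h_int
  exact h_int.tsum_eq.symm

theorem confluent_integral_representation (a c : ℂ)
    (ha : 0 < a.re) (hac : a.re < c.re) :
    ∀ z : ℂ,
      hyp1F1 a c z
        = Complex.Gamma c / (Complex.Gamma a * Complex.Gamma (c - a)) *
            ∫ t in (0:ℝ)..1,
              (t : ℂ) ^ (a - 1) * ((1 : ℂ) - t) ^ (c - a - 1) * Complex.exp (t * z) := by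
  intro z
  have hca : 0 < (c - a).re := by rw [sub_re]; linarith
  have hB : Gamma c / (Gamma a * Gamma (c - a)) * betaIntegral a (c - a) = 1 := by
    have h := Gamma_mul_Gamma_eq_betaIntegral ha hca
    rw [add_sub_cancel] at h
    rw [div_mul_eq_mul_div, div_eq_one_iff_eq (mul_ne_zero (Gamma_ne_zero_of_re_pos ha)
      (Gamma_ne_zero_of_re_pos hca)), h]
  rw [intervalIntegral_mul_cexp_eq_tsum (betaIntegral_convergent ha hca) z, hyp1F1,
    ← tsum_mul_left]
  refine tsum_congr fun j => ?_
  rw [intervalIntegral_pow_mul_betaIntegrand, betaIntegral_add_nat ha hca, add_sub_cancel]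
  linear_combination -(cpoch a j * z ^ j / (cpoch c j * j.factorial)) * hB
end
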